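/- arXiv:2312.10303 — 5 statements merged into one kernel-verified Lean document; each statement's English description precedes it below -/
import Mathlib

section
/- Let n be a natural number, let W_0 > 0 be a real number, and let w_1, …, w_n be real numbers satisfying 0 ≤ w_k ≤ W_{k-1} for every 1 ≤ k ≤ n, where W_k := W_{k-1} + w_k. Then ∑_{k=1}^n w_k / √(W_{k-1}) ≤ (√2 + 1) · √(W_n). -/
/-- Per-step bound: if `0 < a`, `0 ≤ v ≤ a`, `b = a + v`, then
`v / √a ≤ (√2 + 1) * (√b - √a)`. -/
lemma step_bound (a b v : ℝ) (ha : 0 < a) (hv0 : 0 ≤ v) (hva : v ≤ a)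
    (hb : b = a + v) : v / Real.sqrt a ≤ (Real.sqrt 2 + 1) * (Real.sqrt b - Real.sqrt a) := by
  have hsa : 0 < Real.sqrt a := Real.sqrt_pos.mpr ha
  have hab : a ≤ b := by linarith
  have hsab : Real.sqrt a ≤ Real.sqrt b := Real.sqrt_le_sqrt hab
  have hb2 : Real.sqrt b ≤ Real.sqrt 2 * Real.sqrt a := by
    rw [← Real.sqrt_mul (by norm_num)]
    exact Real.sqrt_le_sqrt (by linarith)
  have hsa2 : Real.sqrt a ^ 2 = a := Real.sq_sqrt ha.le
  have hsb2 : Real.sqrt b ^ 2 = b := Real.sq_sqrt (by linarith)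
  rw [div_le_iff₀ hsa]
  nlinarith [mul_nonneg (sub_nonneg.mpr hsab) (sub_nonneg.mpr hb2)]

theorem aux (n : ℕ) (W w : ℕ → ℝ) (hW0 : 0 < W 0)
    (hw : ∀ k, 1 ≤ k → k ≤ n → 0 ≤ w k ∧ w k ≤ W (k - 1))
    (hWrec : ∀ k, 1 ≤ k → k ≤ n → W k = W (k - 1) + w k) :
    0 < W n ∧ ∑ k ∈ Finset.Icc 1 n, w k / Real.sqrt (W (k - 1))
      ≤ (Real.sqrt 2 + 1) * (Real.sqrt (W n) - Real.sqrt (W 0)) := by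
  induction n with
  | zero => simp [hW0]
  | succ m ih =>
    obtain ⟨hpos, hsum⟩ := ih
      (fun k h1 h2 => hw k h1 (h2.trans (Nat.le_succ m)))
      (fun k h1 h2 => hWrec k h1 (h2.trans (Nat.le_succ m)))
    obtain ⟨hw0, hwle⟩ := hw (m + 1) (Nat.le_add_left 1 m) le_rfl
    have hrec := hWrec (m + 1) (Nat.le_add_left 1 m) le_rfl
    simp only [Nat.add_sub_cancel] at hw0 hwle hrec
    have hposS : 0 < W (m + 1) := by linarith
    refine ⟨hposS, ?_⟩
    rw [Finset.sum_Icc_succ_top (Nat.le_add_left 1 m)]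
    simp only [Nat.add_sub_cancel]
    have hstep := step_bound (W m) (W (m + 1)) (w (m + 1)) hpos hw0 hwle hrec
    linarith

/-- Sequence-summation lemma (Lemma 8): if `W 0 > 0` and for `1 ≤ k ≤ n` we have
`0 ≤ w k ≤ W (k-1)` and `W k = W (k-1) + w k`, then
`∑_{k=1}^n w k / √(W (k-1)) ≤ (√2 + 1) · √(W n)`. -/
theorem stmt0 (n : ℕ) (W w : ℕ → ℝ) (hW0 : 0 < W 0)
    (hw : ∀ k, 1 ≤ k → k ≤ n → 0 ≤ w k ∧ w k ≤ W (k - 1))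
    (hWrec : ∀ k, 1 ≤ k → k ≤ n → W k = W (k - 1) + w k) :
    ∑ k ∈ Finset.Icc 1 n, w k / Real.sqrt (W (k - 1))
      ≤ (Real.sqrt 2 + 1) * Real.sqrt (W n) := by
  obtain ⟨hpos, hsum⟩ := aux n W w hW0 hw hWrec
  have h2 : (0:ℝ) ≤ Real.sqrt 2 + 1 := by positivity
  have h0 : 0 ≤ Real.sqrt (W 0) := Real.sqrt_nonneg _
  nlinarith [mul_nonneg h2 h0]
end

section
/- For any natural number n and any nonnegative real numbers w_1, …, w_n with partial sums W_k := ∑_{i=1}^k w_i, one has ∑_{k=1}^n w_k / √(W_k) ≤ (√2 + 1) · √(W_n), where division by zero is interpreted as 0 (Lean convention x/0 = 0). -/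
lemma key_step (V W : ℝ) (h0 : 0 ≤ V) (h : V ≤ W) :
    (W - V) / Real.sqrt W ≤ 2 * (Real.sqrt W - Real.sqrt V) := by
  rcases eq_or_lt_of_le (h0.trans h) with hW | hW
  · have hV : V = 0 := le_antisymm (h.trans hW.symm.le) h0
    simp [← hW, hV]
  · have hsW : 0 < Real.sqrt W := Real.sqrt_pos.mpr hW
    rw [div_le_iff₀ hsW]
    have hsq : W - V = (Real.sqrt W - Real.sqrt V) * (Real.sqrt W + Real.sqrt V) := by
      have h1 : Real.sqrt W * Real.sqrt W = W := Real.mul_self_sqrt hW.le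
      have h2 : Real.sqrt V * Real.sqrt V = V := Real.mul_self_sqrt h0
      nlinarith
    rw [hsq]
    have hle : Real.sqrt V ≤ Real.sqrt W := Real.sqrt_le_sqrt h
    have hdiff : 0 ≤ Real.sqrt W - Real.sqrt V := by linarith
    nlinarith [Real.sqrt_nonneg V]

/-- Variant of the sequence-summation lemma: for nonnegative `w 1, …, w n` with partial sums
`W k = ∑_{i=1}^k w i`, we have `∑_{k=1}^n w k / √(W k) ≤ (√2 + 1) · √(W n)`
(with the Lean convention `x / 0 = 0`). -/
theorem stmt1 (n : ℕ) (w : ℕ → ℝ) (hw : ∀ k, 1 ≤ k → k ≤ n → 0 ≤ w k) :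
    ∑ k ∈ Finset.Icc 1 n, w k / Real.sqrt (∑ i ∈ Finset.Icc 1 k, w i)
      ≤ (Real.sqrt 2 + 1) * Real.sqrt (∑ i ∈ Finset.Icc 1 n, w i) := by
  have h2 : (2 : ℝ) ≤ Real.sqrt 2 + 1 := by
    nlinarith [Real.sq_sqrt (by norm_num : (0:ℝ) ≤ 2), Real.sqrt_nonneg 2,
      Real.one_le_sqrt.mpr (by norm_num : (1:ℝ) ≤ 2)]
  -- prove with constant 2, then conclude
  have main : ∑ k ∈ Finset.Icc 1 n, w k / Real.sqrt (∑ i ∈ Finset.Icc 1 k, w i)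
      ≤ 2 * Real.sqrt (∑ i ∈ Finset.Icc 1 n, w i) := by
    induction n with
    | zero => simp
    | succ n ih =>
      have hw' : ∀ k, 1 ≤ k → k ≤ n → 0 ≤ w k := fun k h1 h2 => hw k h1 (h2.trans n.le_succ)
      have hWn : 0 ≤ ∑ i ∈ Finset.Icc 1 n, w i :=
        Finset.sum_nonneg fun i hi => hw' i (Finset.mem_Icc.mp hi).1 (Finset.mem_Icc.mp hi).2
      have hsplit : Finset.Icc 1 (n+1) = insert (n+1) (Finset.Icc 1 n) := by
        rw [← Finset.insert_Icc_right_eq_Icc_add_one (Nat.succ_le_succ n.zero_le)]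
      have hmono : (∑ i ∈ Finset.Icc 1 n, w i) ≤ ∑ i ∈ Finset.Icc 1 (n+1), w i := by
        rw [hsplit, Finset.sum_insert (by simp)]
        have := hw (n+1) (Nat.succ_le_succ n.zero_le) le_rfl
        linarith
      rw [hsplit, Finset.sum_insert (by simp)]
      have hkey := key_step (∑ i ∈ Finset.Icc 1 n, w i) (∑ i ∈ Finset.Icc 1 (n+1), w i) hWn hmono
      have hw1 : w (n+1) = (∑ i ∈ Finset.Icc 1 (n+1), w i) - ∑ i ∈ Finset.Icc 1 n, w i := by
        rw [hsplit, Finset.sum_insert (by simp)]; ring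
      rw [← hsplit] at *
      calc w (n+1) / Real.sqrt (∑ i ∈ Finset.Icc 1 (n+1), w i)
            + ∑ k ∈ Finset.Icc 1 n, w k / Real.sqrt (∑ i ∈ Finset.Icc 1 k, w i)
          ≤ 2 * (Real.sqrt (∑ i ∈ Finset.Icc 1 (n+1), w i)
              - Real.sqrt (∑ i ∈ Finset.Icc 1 n, w i))
            + 2 * Real.sqrt (∑ i ∈ Finset.Icc 1 n, w i) := by
            rw [hw1]; exact add_le_add hkey (ih hw')
        _ = 2 * Real.sqrt (∑ i ∈ Finset.Icc 1 (n+1), w i) := by ring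
  calc _ ≤ _ := main
    _ ≤ (Real.sqrt 2 + 1) * Real.sqrt (∑ i ∈ Finset.Icc 1 n, w i) :=
        mul_le_mul_of_nonneg_right h2 (Real.sqrt_nonneg _)
end

section
/- For all real numbers W ≥ 0 and w ≥ 0, it holds that (√2 + 1) · √W + w / √(W + w) ≤ (√2 + 1) · √(W + w), where division by zero is interpreted as 0 (Lean convention x/0 = 0). -/
/-- Inductive step of the sequence-summation lemma: for `W, w ≥ 0`,
`(√2 + 1)·√W + w/√(W + w) ≤ (√2 + 1)·√(W + w)`
(with the Lean convention `x / 0 = 0`). -/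
theorem stmt2 (W w : ℝ) (hW : 0 ≤ W) (hw : 0 ≤ w) :
    (Real.sqrt 2 + 1) * Real.sqrt W + w / Real.sqrt (W + w)
      ≤ (Real.sqrt 2 + 1) * Real.sqrt (W + w) := by
  rcases eq_or_lt_of_le (by positivity : (0:ℝ) ≤ W + w) with h | h
  · have hW0 : W = 0 := by linarith
    have hw0 : w = 0 := by linarith
    simp [hW0, hw0]
  · have hs : 0 < Real.sqrt (W + w) := Real.sqrt_pos.2 h
    have key : w / Real.sqrt (W + w) ≤ (Real.sqrt 2 + 1) * (Real.sqrt (W + w) - Real.sqrt W) := by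
      rw [div_le_iff₀ hs]
      have h1 : Real.sqrt (W + w) ^ 2 = W + w := Real.sq_sqrt (le_of_lt h)
      have h2 : Real.sqrt W ^ 2 = W := Real.sq_sqrt hW
      have h3 : Real.sqrt 2 ^ 2 = 2 := Real.sq_sqrt (by norm_num)
      have h4 : 0 ≤ Real.sqrt W := Real.sqrt_nonneg W
      have h5 : 0 ≤ Real.sqrt 2 := Real.sqrt_nonneg 2
      have h6 : Real.sqrt W ≤ Real.sqrt (W + w) := Real.sqrt_le_sqrt (by linarith)
      nlinarith [sq_nonneg (Real.sqrt (W + w) - Real.sqrt W), sq_nonneg (Real.sqrt 2 * Real.sqrt (W+w) - Real.sqrt 2 * Real.sqrt W - Real.sqrt W), mul_nonneg h4 hs.le]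
    linarith
end

section
/- Let K, m be natural numbers and M ≥ 0 a real number. For each i = 1, …, m let C_i^0 > 0 and let c_i^1, …, c_i^K be reals with 0 ≤ c_i^k ≤ C_i^{k-1}, where C_i^k := C_i^{k-1} + c_i^k. If ∑_{i=1}^m C_i^K ≤ M, then ∑_{k=1}^K ∑_{i=1}^m c_i^k / √(C_i^{k-1}) ≤ (√2 + 1) · √(m · M). -/
lemma telescope (K : ℕ) (f : ℕ → ℝ) :
    ∑ k ∈ Finset.Icc 1 K, (f k - f (k-1)) = f K - f 0 := by
  induction K with
  | zero => simp
  | succ n ih =>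
    rw [Finset.sum_Icc_succ_top (Nat.le_add_left 1 n), ih]
    simp

lemma step_ineq (a d : ℝ) (ha : 0 < a) (hd0 : 0 ≤ d) (hda : d ≤ a) :
    d / Real.sqrt a ≤ (Real.sqrt 2 + 1) * (Real.sqrt (a + d) - Real.sqrt a) := by
  have hsa : 0 < Real.sqrt a := Real.sqrt_pos.mpr ha
  have hsb : 0 ≤ Real.sqrt (a + d) := Real.sqrt_nonneg _
  have hsa2 : Real.sqrt a ^ 2 = a := Real.sq_sqrt ha.le
  have hsb2 : Real.sqrt (a + d) ^ 2 = a + d := Real.sq_sqrt (by linarith)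
  have hmono : Real.sqrt a ≤ Real.sqrt (a + d) := Real.sqrt_le_sqrt (by linarith)
  have h2 : Real.sqrt (a + d) ≤ Real.sqrt 2 * Real.sqrt a := by
    rw [← Real.sqrt_mul (by norm_num)]
    exact Real.sqrt_le_sqrt (by linarith)
  rw [div_le_iff₀ hsa]
  nlinarith [mul_nonneg (sub_nonneg.mpr hmono) (sub_nonneg.mpr h2), hsa.le]

/-- Composite counting bound: for each `i` of `m` indices, `C i 0 > 0`,
`0 ≤ c i k ≤ C i (k-1)` and `C i k = C i (k-1) + c i k` for `1 ≤ k ≤ K`;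
if `∑ i, C i K ≤ M` then
`∑_{k=1}^K ∑_i c i k / √(C i (k-1)) ≤ (√2 + 1)·√(m·M)`. -/
theorem stmt3 (K m : ℕ) (M : ℝ) (hM : 0 ≤ M)
    (c C : Fin m → ℕ → ℝ)
    (hC0 : ∀ i, 0 < C i 0)
    (hc : ∀ i, ∀ k, 1 ≤ k → k ≤ K → 0 ≤ c i k ∧ c i k ≤ C i (k - 1))
    (hrec : ∀ i, ∀ k, 1 ≤ k → k ≤ K → C i k = C i (k - 1) + c i k)
    (hsum : ∑ i, C i K ≤ M) :
    ∑ k ∈ Finset.Icc 1 K, ∑ i, c i k / Real.sqrt (C i (k - 1))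
      ≤ (Real.sqrt 2 + 1) * Real.sqrt (m * M) := by
  -- positivity of C along the way
  have hpos : ∀ i, ∀ k, k ≤ K → 0 < C i k := by
    intro i k
    induction k with
    | zero => intro _; exact hC0 i
    | succ n ih =>
      intro hnK
      have h1 : 1 ≤ n + 1 := Nat.le_add_left 1 n
      rw [hrec i (n+1) h1 hnK]
      have := (hc i (n+1) h1 hnK).1
      simp only [Nat.add_sub_cancel] at *
      have := ih (Nat.le_of_succ_le hnK)
      linarith
  have hsqrt2 : (0:ℝ) ≤ Real.sqrt 2 + 1 := by positivity
  -- per-index bound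
  have key : ∀ i : Fin m, ∑ k ∈ Finset.Icc 1 K, c i k / Real.sqrt (C i (k - 1))
      ≤ (Real.sqrt 2 + 1) * Real.sqrt (C i K) := by
    intro i
    have step : ∀ k ∈ Finset.Icc 1 K, c i k / Real.sqrt (C i (k - 1))
        ≤ (Real.sqrt 2 + 1) * (Real.sqrt (C i k) - Real.sqrt (C i (k-1))) := by
      intro k hk
      obtain ⟨hk1, hkK⟩ := Finset.mem_Icc.mp hk
      have ha : 0 < C i (k-1) := hpos i (k-1) (le_trans (Nat.sub_le k 1) hkK)
      obtain ⟨hd0, hda⟩ := hc i k hk1 hkK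
      have := step_ineq (C i (k-1)) (c i k) ha hd0 hda
      rwa [← hrec i k hk1 hkK] at this
    calc ∑ k ∈ Finset.Icc 1 K, c i k / Real.sqrt (C i (k - 1))
        ≤ ∑ k ∈ Finset.Icc 1 K, (Real.sqrt 2 + 1) * (Real.sqrt (C i k) - Real.sqrt (C i (k-1))) :=
          Finset.sum_le_sum step
      _ = (Real.sqrt 2 + 1) * ∑ k ∈ Finset.Icc 1 K, (Real.sqrt (C i k) - Real.sqrt (C i (k-1))) :=
          (Finset.mul_sum _ _ _).symm
      _ ≤ (Real.sqrt 2 + 1) * Real.sqrt (C i K) := by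
          apply mul_le_mul_of_nonneg_left _ hsqrt2
          have htel : ∑ k ∈ Finset.Icc 1 K, (Real.sqrt (C i k) - Real.sqrt (C i (k-1)))
              = Real.sqrt (C i K) - Real.sqrt (C i 0) :=
            telescope K (fun j => Real.sqrt (C i j))
          rw [htel]
          have := Real.sqrt_nonneg (C i 0)
          linarith
  -- combine
  rw [Finset.sum_comm]
  calc ∑ i, ∑ k ∈ Finset.Icc 1 K, c i k / Real.sqrt (C i (k - 1))
      ≤ ∑ i, (Real.sqrt 2 + 1) * Real.sqrt (C i K) := Finset.sum_le_sum fun i _ => key i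
    _ = (Real.sqrt 2 + 1) * ∑ i, Real.sqrt (C i K) := (Finset.mul_sum _ _ _).symm
    _ ≤ (Real.sqrt 2 + 1) * Real.sqrt (m * M) := by
        apply mul_le_mul_of_nonneg_left _ hsqrt2
        have hCnonneg : ∀ i : Fin m, 0 ≤ C i K := fun i => (hpos i K le_rfl).le
        have hcs := Finset.sum_mul_sq_le_sq_mul_sq Finset.univ (fun _ : Fin m => (1:ℝ))
          (fun i => Real.sqrt (C i K))
        simp only [one_mul, one_pow, Finset.sum_const, Finset.card_univ, Fintype.card_fin,
          nsmul_eq_mul, mul_one] at hcs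
        have hsq : ∀ i : Fin m, Real.sqrt (C i K) ^ 2 = C i K := fun i => Real.sq_sqrt (hCnonneg i)
        rw [Finset.sum_congr rfl fun i _ => hsq i] at hcs
        have h1 : ∑ i, Real.sqrt (C i K) ≤ Real.sqrt ((m:ℝ) * ∑ i, C i K) := by
          rw [show ((m:ℝ) * ∑ i, C i K) = Real.sqrt (∑ i, C i K) ^2 * (m:ℝ) from by
            rw [Real.sq_sqrt (Finset.sum_nonneg fun i _ => hCnonneg i)]; ring] at hcs ⊢
          rw [Real.le_sqrt (Finset.sum_nonneg fun i _ => Real.sqrt_nonneg _)]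
          · linarith
          · positivity
        calc ∑ i, Real.sqrt (C i K) ≤ Real.sqrt ((m:ℝ) * ∑ i, C i K) := h1
            _ ≤ Real.sqrt ((m:ℝ) * M) := Real.sqrt_le_sqrt
                (mul_le_mul_of_nonneg_left hsum (Nat.cast_nonneg m))
end

section
/- Let S be a finite nonempty type. Let P and Q be row-stochastic S × S real matrices (all entries nonnegative and each row summing to 1), let μ be a stationary distribution of P and ν a stationary distribution of Q. Let C ≥ 1 and 0 < ρ < 1 be reals such that for every probability vector λ on S and every integer t ≥ 1, ∑_s |(λPᵗ)(s) − μ(s)| ≤ C·ρᵗ. Set n̂ := ⌈log C / log(1/ρ)⌉. Then ∑_s |μ(s) − ν(s)| ≤ (n̂ + C·ρ^{n̂}/(1 − ρ)) · max_s ∑_{s'} |P(s,s') − Q(s,s')|. -/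
/-!
Write `w := ν P - ν = ν (P - Q)`, a signed vector of total mass zero with
`‖w‖₁ ≤ max_s ‖P s - Q s‖₁`. Telescoping gives `ν Pᵗ - ν = ∑_{k < t} w Pᵏ`. Each term is bounded
in two ways: `‖w Pᵏ‖₁ ≤ ‖w‖₁` because `P` is an `ℓ¹` contraction, and `‖w Pᵏ‖₁ ≤ C ρᵏ ‖w‖₁`
because `w = m (w⁺/m - w⁻/m)` with `m = ∑ w⁺ = ∑ w⁻` is a multiple of a difference of two
probability vectors, each of which is `C ρᵏ`-close to `μ` after `k` steps. Using the first
bound for `k < n̂` and the second afterwards gives `‖ν Pᵗ - ν‖₁ ≤ (n̂ + C ρ^n̂ / (1 - ρ)) ‖w‖₁`,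
and `ν Pᵗ → μ` as `t → ∞`.
-/

open Finset Filter Topology

namespace Matrix

variable {S T : Type*} [Fintype S] [Fintype T]

lemma sum_abs_vecMul_le (z : S → ℝ) (A : Matrix S T ℝ) :
    ∑ t, |(z ᵥ* A) t| ≤ ∑ s, |z s| * ∑ t, |A s t| := by
  calc ∑ t, |(z ᵥ* A) t| ≤ ∑ t, ∑ s, |z s| * |A s t| := by
        gcongr with t
        simpa only [vecMul, dotProduct, abs_mul] using
          abs_sum_le_sum_abs (fun s => z s * A s t) univ
    _ = ∑ s, |z s| * ∑ t, |A s t| := by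
        rw [sum_comm]; simp only [mul_sum]

lemma sum_abs_vecMul_le_sup' [Nonempty S] {ν : S → ℝ} (hν0 : ∀ s, 0 ≤ ν s)
    (hν1 : ∑ s, ν s = 1) (A : Matrix S T ℝ) :
    ∑ t, |(ν ᵥ* A) t| ≤ univ.sup' univ_nonempty (fun s => ∑ t, |A s t|) := by
  calc ∑ t, |(ν ᵥ* A) t| ≤ ∑ s, ν s * ∑ t, |A s t| := by
        simpa only [abs_of_nonneg (hν0 _)] using sum_abs_vecMul_le ν A
    _ ≤ ∑ s, ν s * univ.sup' univ_nonempty (fun s => ∑ t, |A s t|) := by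
        gcongr with s
        · exact hν0 s
        · exact le_sup' (fun s => ∑ t, |A s t|) (mem_univ s)
    _ = univ.sup' univ_nonempty (fun s => ∑ t, |A s t|) := by
        rw [← sum_mul, hν1, one_mul]

section Mixing

variable {A : Matrix S T ℝ} {μ : T → ℝ} {ε : ℝ}

lemma sum_abs_vecMul_sub_sum_mul_le
    (hmix : ∀ l : S → ℝ, (∀ s, 0 ≤ l s) → ∑ s, l s = 1 → ∑ t, |(l ᵥ* A) t - μ t| ≤ ε)
    {l : S → ℝ} (hl : ∀ s, 0 ≤ l s) :
    ∑ t, |(l ᵥ* A) t - (∑ s, l s) * μ t| ≤ (∑ s, l s) * ε := by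
  set m := ∑ s, l s with hm_def
  rcases (sum_nonneg fun s _ => hl s : 0 ≤ m).eq_or_lt with hm | hm
  · have hl0 : l = 0 :=
      funext fun s => (sum_eq_zero_iff_of_nonneg fun s _ => hl s).1 hm.symm s (mem_univ s)
    rw [show m = 0 from hm.symm, hl0]
    simp
  · have hl' : l = m • (m⁻¹ • l) := by rw [smul_smul, mul_inv_cancel₀ hm.ne', one_smul]
    have hmix' := hmix (m⁻¹ • l) (fun s => mul_nonneg (inv_nonneg.2 hm.le) (hl s))
      (by
        simp only [Pi.smul_apply, smul_eq_mul, ← mul_sum, ← hm_def]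
        exact inv_mul_cancel₀ hm.ne')
    calc ∑ t, |(l ᵥ* A) t - m * μ t| = m * ∑ t, |((m⁻¹ • l) ᵥ* A) t - μ t| := by
          rw [mul_sum]
          refine sum_congr rfl fun t _ => ?_
          conv_lhs => rw [hl', smul_vecMul, Pi.smul_apply, smul_eq_mul, ← mul_sub, abs_mul,
            abs_of_pos hm]
      _ ≤ m * ε := mul_le_mul_of_nonneg_left hmix' hm.le

lemma sum_abs_vecMul_le_of_sum_eq_zero
    (hmix : ∀ l : S → ℝ, (∀ s, 0 ≤ l s) → ∑ s, l s = 1 → ∑ t, |(l ᵥ* A) t - μ t| ≤ ε)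
    {z : S → ℝ} (hz : ∑ s, z s = 0) :
    ∑ t, |(z ᵥ* A) t| ≤ ε * ∑ s, |z s| := by
  have hmass : ∑ s, z⁻ s = ∑ s, z⁺ s := by
    rw [eq_comm, ← sub_eq_zero, ← sum_sub_distrib, ← hz]
    exact sum_congr rfl fun s _ => congrFun (posPart_sub_negPart z) s
  have habs : ∑ s, |z s| = ∑ s, z⁺ s + ∑ s, z⁻ s := by
    rw [← sum_add_distrib]
    exact sum_congr rfl fun s _ => (posPart_add_negPart (z s)).symm
  have hpos := sum_abs_vecMul_sub_sum_mul_le hmix (l := z⁺) fun s => posPart_nonneg (z s)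
  have hneg := sum_abs_vecMul_sub_sum_mul_le hmix (l := z⁻) fun s => negPart_nonneg (z s)
  rw [hmass] at hneg
  calc ∑ t, |(z ᵥ* A) t|
      = ∑ t, |((z⁺ ᵥ* A) t - (∑ s, z⁺ s) * μ t) - ((z⁻ ᵥ* A) t - (∑ s, z⁺ s) * μ t)| := by
        conv_lhs => rw [← posPart_sub_negPart z, sub_vecMul]
        simp only [Pi.sub_apply, sub_sub_sub_cancel_right]
    _ ≤ ∑ t, (|(z⁺ ᵥ* A) t - (∑ s, z⁺ s) * μ t| + |(z⁻ ᵥ* A) t - (∑ s, z⁺ s) * μ t|) := by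
        gcongr with t; exact abs_sub _ _
    _ ≤ (∑ s, z⁺ s) * ε + (∑ s, z⁺ s) * ε := by
        rw [sum_add_distrib]; exact add_le_add hpos hneg
    _ = ε * ∑ s, |z s| := by
        rw [habs, hmass]; ring

end Mixing

variable [DecidableEq S]

lemma sum_vecMul_of_mem_rowStochastic {P : Matrix S S ℝ} (hP : P ∈ rowStochastic ℝ S)
    (x : S → ℝ) : ∑ s, (x ᵥ* P) s = ∑ s, x s := by
  rw [← dotProduct_one, ← dotProduct_one, ← dotProduct_mulVec, one_vecMul_of_mem_rowStochastic hP]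

lemma sum_abs_vecMul_le_of_mem_rowStochastic {P : Matrix S S ℝ} (hP : P ∈ rowStochastic ℝ S)
    (z : S → ℝ) : ∑ s, |(z ᵥ* P) s| ≤ ∑ s, |z s| := by
  have hrow : ∀ s, ∑ t, |P s t| = 1 := fun s => by
    simp_rw [abs_of_nonneg (nonneg_of_mem_rowStochastic hP)]
    exact sum_row_of_mem_rowStochastic hP s
  simpa only [hrow, mul_one] using sum_abs_vecMul_le z P

lemma sum_abs_vecMul_pow_le_of_sum_eq_zero {P : Matrix S S ℝ} {μ : S → ℝ} {C ρ : ℝ}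
    (hC : 1 ≤ C)
    (hmix : ∀ l : S → ℝ, (∀ s, 0 ≤ l s) → ∑ s, l s = 1 →
      ∀ t : ℕ, 1 ≤ t → ∑ s, |(l ᵥ* P ^ t) s - μ s| ≤ C * ρ ^ t)
    {z : S → ℝ} (hz : ∑ s, z s = 0) (k : ℕ) :
    ∑ s, |(z ᵥ* P ^ k) s| ≤ C * ρ ^ k * ∑ s, |z s| := by
  rcases k.eq_zero_or_pos with rfl | hk
  · simpa using mul_le_mul_of_nonneg_right hC (sum_nonneg fun s _ => abs_nonneg (z s))
  · exact sum_abs_vecMul_le_of_sum_eq_zero (fun l hl0 hl1 => hmix l hl0 hl1 k hk) hz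

lemma vecMul_pow_sub_self (ν : S → ℝ) (P : Matrix S S ℝ) (t : ℕ) :
    ν ᵥ* P ^ t - ν = ∑ k ∈ range t, (ν ᵥ* P - ν) ᵥ* P ^ k := by
  have hstep : ∀ k, (ν ᵥ* P - ν) ᵥ* P ^ k = ν ᵥ* P ^ (k + 1) - ν ᵥ* P ^ k := fun k => by
    rw [sub_vecMul, vecMul_vecMul, ← pow_succ']
  simp_rw [hstep]
  rw [sum_range_sub (fun k => ν ᵥ* P ^ k)]
  simp

end Matrix

lemma sum_range_le_of_le_of_le_geometric {a : ℕ → ℝ} {D C ρ : ℝ} (ha0 : ∀ k, 0 ≤ a k)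
    (haD : ∀ k, a k ≤ D) (hageo : ∀ k, a k ≤ C * ρ ^ k * D) (hCD : 0 ≤ C * D)
    (hρ0 : 0 ≤ ρ) (hρ1 : ρ < 1) (N t : ℕ) :
    ∑ k ∈ range t, a k ≤ (N + C * ρ ^ N / (1 - ρ)) * D := by
  calc ∑ k ∈ range t, a k ≤ ∑ k ∈ range (N + t), a k :=
        sum_le_sum_of_subset_of_nonneg (range_mono (by omega)) fun k _ _ => ha0 k
    _ = ∑ k ∈ range N, a k + ∑ k ∈ Ico N (N + t), a k :=
        (sum_range_add_sum_Ico _ (by omega)).symm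
    _ ≤ ∑ k ∈ range N, D + ∑ k ∈ Ico N (N + t), C * D * ρ ^ k := by
        gcongr with k _ k _
        · exact haD k
        · linarith [hageo k]
    _ ≤ N * D + C * D * (ρ ^ N / (1 - ρ)) := by
        rw [sum_const, card_range, nsmul_eq_mul, ← mul_sum]
        gcongr
        exact geom_sum_Ico_le_of_lt_one hρ0 hρ1
    _ = (N + C * ρ ^ N / (1 - ρ)) * D := by ring

open Matrix in
theorem sum_abs_sub_le_of_geometric_mixing {S : Type*} [Fintype S] [DecidableEq S]
    {P : Matrix S S ℝ} (hP : P ∈ rowStochastic ℝ S) {μ ν : S → ℝ} {C ρ : ℝ}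
    (hν0 : ∀ s, 0 ≤ ν s) (hν1 : ∑ s, ν s = 1) (hC : 1 ≤ C) (hρ0 : 0 ≤ ρ) (hρ1 : ρ < 1)
    (hmix : ∀ l : S → ℝ, (∀ s, 0 ≤ l s) → ∑ s, l s = 1 →
      ∀ t : ℕ, 1 ≤ t → ∑ s, |(l ᵥ* P ^ t) s - μ s| ≤ C * ρ ^ t) (N : ℕ) :
    ∑ s, |μ s - ν s| ≤ (N + C * ρ ^ N / (1 - ρ)) * ∑ s, |(ν ᵥ* P - ν) s| := by
  set w := ν ᵥ* P - ν
  set B := (N + C * ρ ^ N / (1 - ρ)) * ∑ s, |w s|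
  have hw : ∑ s, w s = 0 := by
    simp only [w, Pi.sub_apply, sum_sub_distrib, sum_vecMul_of_mem_rowStochastic hP, sub_self]
  have hdrift : ∀ t, ∑ s, |(ν ᵥ* P ^ t - ν : S → ℝ) s| ≤ B := fun t => by
    rw [vecMul_pow_sub_self]
    calc ∑ s, |(∑ k ∈ range t, w ᵥ* P ^ k) s| ≤ ∑ k ∈ range t, ∑ s, |(w ᵥ* P ^ k) s| := by
          rw [sum_comm]
          gcongr with s
          simpa only [Finset.sum_apply] using
            abs_sum_le_sum_abs (fun k => (w ᵥ* P ^ k) s) (range t)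
      _ ≤ B := sum_range_le_of_le_of_le_geometric (fun k => sum_nonneg fun s _ => abs_nonneg _)
          (fun k => sum_abs_vecMul_le_of_mem_rowStochastic (pow_mem hP k) w)
          (sum_abs_vecMul_pow_le_of_sum_eq_zero hC hmix hw)
          (mul_nonneg (by linarith) (sum_nonneg fun s _ => abs_nonneg _)) hρ0 hρ1 N t
  have hbound : ∀ t, ∑ s, |μ s - ν s| ≤ C * ρ ^ (t + 1) + B := fun t =>
    calc ∑ s, |μ s - ν s|
        ≤ ∑ s, (|(ν ᵥ* P ^ (t + 1)) s - μ s| + |(ν ᵥ* P ^ (t + 1) - ν : S → ℝ) s|) := by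
          gcongr with s
          rw [abs_sub_comm ((ν ᵥ* P ^ (t + 1)) s) (μ s)]
          exact abs_sub_le _ _ _
      _ ≤ C * ρ ^ (t + 1) + B := by
          rw [sum_add_distrib]
          exact add_le_add (hmix ν hν0 hν1 _ le_add_self) (hdrift _)
  have hlim : Tendsto (fun t : ℕ => C * ρ ^ (t + 1) + B) atTop (𝓝 B) := by
    simpa using (((tendsto_pow_atTop_nhds_zero_of_lt_one hρ0 hρ1).comp
      (tendsto_add_atTop_nat 1)).const_mul C).add_const B
  exact ge_of_tendsto' hlim hbound

open Matrix in
theorem stmt5_general {S : Type*} [Fintype S] [DecidableEq S] [Nonempty S]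
    (P Q : Matrix S S ℝ) (μ ν : S → ℝ) (C ρ : ℝ)
    (hP0 : ∀ s s', 0 ≤ P s s') (hP1 : ∀ s, ∑ s', P s s' = 1)
    (hν0 : ∀ s, 0 ≤ ν s) (hν1 : ∑ s, ν s = 1) (hνQ : Matrix.vecMul ν Q = ν)
    (hC : 1 ≤ C) (hρ0 : 0 < ρ) (hρ1 : ρ < 1)
    (hmix : ∀ l : S → ℝ, (∀ s, 0 ≤ l s) → ∑ s, l s = 1 →
      ∀ t : ℕ, 1 ≤ t → ∑ s, |Matrix.vecMul l (P ^ t) s - μ s| ≤ C * ρ ^ t) :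
    ∑ s, |μ s - ν s| ≤
      ((⌈Real.log C / Real.log (1 / ρ)⌉ : ℝ)
          + C * ρ ^ (⌈Real.log C / Real.log (1 / ρ)⌉ : ℤ) / (1 - ρ))
        * Finset.univ.sup' Finset.univ_nonempty
            (fun s => ∑ s', |P s s' - Q s s'|) := by
  have hP : P ∈ rowStochastic ℝ S := mem_rowStochastic_iff_sum.2 ⟨hP0, hP1⟩
  have hdefect : ∑ s, |(ν ᵥ* P - ν) s| ≤
      univ.sup' univ_nonempty (fun s => ∑ s', |P s s' - Q s s'|) := by
    rw [show ν ᵥ* P - ν = ν ᵥ* (P - Q) by rw [vecMul_sub, hνQ]]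
    exact sum_abs_vecMul_le_sup' hν0 hν1 (P - Q)
  have hn : 0 ≤ ⌈Real.log C / Real.log (1 / ρ)⌉ := Int.ceil_nonneg <|
    div_nonneg (Real.log_nonneg hC) (Real.log_nonneg (one_le_one_div hρ0 hρ1.le))
  obtain ⟨N, hN⟩ := Int.eq_ofNat_of_zero_le hn
  rw [hN, Int.cast_natCast, zpow_natCast]
  have hcoeff : 0 ≤ (N + C * ρ ^ N / (1 - ρ) : ℝ) :=
    add_nonneg N.cast_nonneg (div_nonneg (by positivity) (by linarith))
  exact (sum_abs_sub_le_of_geometric_mixing hP hν0 hν1 hC hρ0.le hρ1 hmix N).trans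
    (mul_le_mul_of_nonneg_left hdefect hcoeff)

/-- Markov chain perturbation bound (Mitrophanov 2005, Cor. 3.1; paper's Corollary 1):
if `μ` is a stationary distribution of the row-stochastic matrix `P`, `ν` a stationary
distribution of the row-stochastic matrix `Q`, and the chain `P` is geometrically ergodic
with constants `C ≥ 1`, `0 < ρ < 1`, then with `n̂ = ⌈log C / log (1/ρ)⌉`,
`‖μ − ν‖₁ ≤ (n̂ + C ρ^n̂ / (1 − ρ)) · max_s ‖P s - Q s‖₁`. -/
theorem stmt5 {S : Type*} [Fintype S] [DecidableEq S] [Nonempty S]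
    (P Q : Matrix S S ℝ) (μ ν : S → ℝ) (C ρ : ℝ)
    (hP0 : ∀ s s', 0 ≤ P s s') (hP1 : ∀ s, ∑ s', P s s' = 1)
    (hQ0 : ∀ s s', 0 ≤ Q s s') (hQ1 : ∀ s, ∑ s', Q s s' = 1)
    (hμ0 : ∀ s, 0 ≤ μ s) (hμ1 : ∑ s, μ s = 1) (hμP : Matrix.vecMul μ P = μ)
    (hν0 : ∀ s, 0 ≤ ν s) (hν1 : ∑ s, ν s = 1) (hνQ : Matrix.vecMul ν Q = ν)
    (hC : 1 ≤ C) (hρ0 : 0 < ρ) (hρ1 : ρ < 1)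
    (hmix : ∀ l : S → ℝ, (∀ s, 0 ≤ l s) → ∑ s, l s = 1 →
      ∀ t : ℕ, 1 ≤ t → ∑ s, |Matrix.vecMul l (P ^ t) s - μ s| ≤ C * ρ ^ t) :
    ∑ s, |μ s - ν s| ≤
      ((⌈Real.log C / Real.log (1 / ρ)⌉ : ℝ)
          + C * ρ ^ (⌈Real.log C / Real.log (1 / ρ)⌉ : ℤ) / (1 - ρ))
        * Finset.univ.sup' Finset.univ_nonempty
            (fun s => ∑ s', |P s s' - Q s s'|) :=
  stmt5_general P Q μ ν C ρ hP0 hP1 hν0 hν1 hνQ hC hρ0 hρ1 hmix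
end
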